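/- Any nonzero graded R-submodule of L has a homogeneous Gröbner basis. -/

import Mathlib

open MvPolynomial

/-- The set `𝕏ₑ` of monomials (power products) of the free module `L`:
a pair of a monomial exponent of `R = A[x₁,…,xₙ]` and a basis index. -/
abbrev Mon (n r : ℕ) := (Fin n →₀ ℕ) × Fin r

/-- The free module `L = R e₁ ⊕ ⋯ ⊕ R e_r` over `R = A[x₁,…,xₙ]`. -/
abbrev Lmod (A : Type*) [CommRing A] (n r : ℕ) := Fin r → MvPolynomial (Fin n) A

variable {A B : Type*} [CommRing A] [CommRing B] {n r : ℕ}

/-- The coefficient of `f ∈ L` at the monomial `X ∈ 𝕏ₑ`. -/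
def coeffL (f : Lmod A n r) (X : Mon n r) : A := MvPolynomial.coeff X.1 (f X.2)

/-- The element `c·X` of `L`, for a monomial `X ∈ 𝕏ₑ` and `c ∈ A`. -/
noncomputable def monL (X : Mon n r) (c : A) : Lmod A n r :=
  Pi.single X.2 (MvPolynomial.monomial X.1 c)

open Classical in
/-- The (finite) set of monomials appearing in `f ∈ L` with nonzero coefficient. -/
noncomputable def suppL (f : Lmod A n r) : Finset (Mon n r) :=
  Finset.univ.biUnion fun l => (f l).support.image fun d => (d, l)

/-- Multiplication of a monomial `𝐱 ∈ 𝕏` of `R` with a monomial `X ∈ 𝕏ₑ` of `L`. -/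
noncomputable def mulMon (x : Fin n →₀ ℕ) (X : Mon n r) : Mon n r := (x + X.1, X.2)

/-- `X ∣ Y` for monomials of `L` : `Y = 𝐱 X` for some monomial `𝐱` of `R`. -/
def MonDvd (X Y : Mon n r) : Prop := ∃ x : Fin n →₀ ℕ, Y = mulMon x X

/-- A term order on `𝕏ₑ`: a (linear) order such that (1) `X < 𝐱X` for `𝐱 ≠ 1`, and
(2) `X < Y → 𝐱X < 𝐱Y`. -/
def IsTermOrder (n r : ℕ) [LinearOrder (Mon n r)] : Prop :=
  (∀ (X : Mon n r) (x : Fin n →₀ ℕ), x ≠ 0 → X < mulMon x X) ∧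
  (∀ (X Y : Mon n r) (x : Fin n →₀ ℕ), X < Y → mulMon x X < mulMon x Y)

section Order
variable [LinearOrder (Mon n r)]

/-- The leading power product `lp f` of `f ∈ L` (with value `⊥` for `f = 0`). -/
noncomputable def lpW (f : Lmod A n r) : WithBot (Mon n r) := (suppL f).max

/-- The leading coefficient `lc f` of `f ∈ L` (with junk value `0` for `f = 0`). -/
noncomputable def lcL (f : Lmod A n r) : A :=
  if h : (suppL f).Nonempty then coeffL f ((suppL f).max' h) else 0

/-- The leading term `lt f` of `f ∈ L` (with value `0` for `f = 0`). -/
noncomputable def ltL (f : Lmod A n r) : Lmod A n r :=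
  if h : (suppL f).Nonempty then monL ((suppL f).max' h) (lcL f) else 0

/-- `Lt S` : the `R`-submodule of `L` generated by the leading terms of the
nonzero elements of `S`. -/
noncomputable def LtS (S : Set (Lmod A n r)) :
    Submodule (MvPolynomial (Fin n) A) (Lmod A n r) :=
  Submodule.span (MvPolynomial (Fin n) A) (ltL '' {f ∈ S | f ≠ 0})

/-- `lp g` divides the monomial `X`. -/
def lpDvdMon (g : Lmod A n r) (X : Mon n r) : Prop :=
  ∃ Y : Mon n r, lpW g = (Y : WithBot (Mon n r)) ∧ MonDvd Y X

/-- `lp g` divides `lp f`. -/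
def lpDvd (g f : Lmod A n r) : Prop :=
  ∃ Y Z : Mon n r, lpW g = (Y : WithBot (Mon n r)) ∧ lpW f = (Z : WithBot (Mon n r)) ∧
    MonDvd Y Z

/-- One reduction step `f →_F h`. -/
def Step (F : Finset (Lmod A n r)) (f h : Lmod A n r) : Prop :=
  ∃ (a : Lmod A n r → A) (x : Lmod A n r → (Fin n →₀ ℕ)),
    h = f - ∑ g ∈ F, a g • ((MvPolynomial.monomial (x g) (1 : A)) • g) ∧
    (∀ g ∈ F, a g ≠ 0 → lpW f = (lpW g).map (mulMon (x g))) ∧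
    ltL f = ∑ g ∈ F, a g • ((MvPolynomial.monomial (x g) (1 : A)) • ltL g)

/-- `f ⇒_F h` : `f` reduces to `h` modulo `F` (a finite chain of reduction steps). -/
def Red (F : Finset (Lmod A n r)) : Lmod A n r → Lmod A n r → Prop :=
  Relation.TransGen (Step F)

/-- `f` reduces strictly to `h` modulo `F` : `f ⇒_F h` and `lp h < lp f`. -/
def StrictRed (F : Finset (Lmod A n r)) (f h : Lmod A n r) : Prop :=
  Red F f h ∧ lpW h < lpW f

/-- `G` is a Gröbner basis for `M` : a finite subset of `M ∖ {0}` with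
`Lt G = Lt M`. -/
def IsGB (G : Finset (Lmod A n r))
    (M : Submodule (MvPolynomial (Fin n) A) (Lmod A n r)) : Prop :=
  (G : Set (Lmod A n r)) ⊆ (M : Set (Lmod A n r)) \ {0} ∧
  LtS (G : Set (Lmod A n r)) = LtS (M : Set (Lmod A n r))

open Classical in
/-- A Gröbner basis `G` is minimal if no `g ∈ G` can be strictly reduced with
respect to `G ∖ {g}`. -/
noncomputable def IsMinimalGB (G : Finset (Lmod A n r)) : Prop :=
  ∀ g ∈ G, ¬ ∃ h : Lmod A n r, StrictRed (G.erase g) g h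

/-- The set `T_G` of totally reduced vectors, relative to a choice of coset
representatives `C X ⊆ A` and of lifts `X̃ = til X`. -/
def TGset (C : Mon n r → Set A) (til : Mon n r → Lmod A n r) : Set (Lmod A n r) :=
  {f | ∃ coef : Mon n r →₀ A, (∀ X, coef X ∈ C X) ∧ f = coef.sum fun X c => c • til X}

end Order

section Graded
variable {𝕜 : Type*} [CommSemiring 𝕜] [Algebra 𝕜 A]

/-- `A = ⊕_{0 ≤ i < a} A_i` is a graded tdvr of length `a` with distinguished
element `ϖ ∈ A_1` : each `A_i` (`i < a`) is a one-dimensional `𝕜`-vector space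
generated by `ϖ^i`, and `A_i = 0` for `i ≥ a`. -/
def IsGradedTdvr (𝒜 : ℕ → Submodule 𝕜 A) (a : ℕ∞) (ϖ : A) : Prop :=
  1 ≤ a ∧ ϖ ∈ 𝒜 1 ∧
  (∀ i : ℕ, (i : ℕ∞) < a → (ϖ ^ i ≠ 0 ∧ 𝒜 i = Submodule.span 𝕜 {ϖ ^ i})) ∧
  (∀ i : ℕ, a ≤ (i : ℕ∞) → 𝒜 i = ⊥)

open Classical in
/-- The valuation of the graded tdvr `A` of length `a` : the smallest degree in
which `x` has a nonzero component, and `a` for `x = 0`. -/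
noncomputable def valA (𝒜 : ℕ → Submodule 𝕜 A) [GradedAlgebra 𝒜] (a : ℕ∞) (x : A) : ℕ∞ :=
  if x = 0 then a
  else sInf {m : ℕ∞ | ∃ i : ℕ, (i : ℕ∞) = m ∧ (DirectSum.decompose 𝒜 x i : A) ≠ 0}

/-- `f ∈ L` is homogeneous of degree `i` (i.e. `f ∈ L_i`): all its coefficients
lie in `A_i`. -/
def HomogL (𝒜 : ℕ → Submodule 𝕜 A) (i : ℕ) (f : Lmod A n r) : Prop :=
  ∀ X : Mon n r, coeffL f X ∈ 𝒜 i

/-- The degree-`i` part of `f ∈ L`, taken coefficientwise. -/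
noncomputable def compL (𝒜 : ℕ → Submodule 𝕜 A) [GradedAlgebra 𝒜] (i : ℕ)
    (f : Lmod A n r) : Lmod A n r := fun l =>
  ∑ d ∈ (f l).support,
    MvPolynomial.monomial d ((DirectSum.decompose 𝒜 (MvPolynomial.coeff d (f l)) i : A))

/-- `M` is a graded submodule of `L` : it contains the homogeneous components of
each of its elements. -/
def IsGradedSub (𝒜 : ℕ → Submodule 𝕜 A) [GradedAlgebra 𝒜]
    (M : Submodule (MvPolynomial (Fin n) A) (Lmod A n r)) : Prop :=
  ∀ f ∈ M, ∀ i : ℕ, compL 𝒜 i f ∈ M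

/-- `A^{<m} = ⊕_{0 ≤ i < m} A_i`. -/
def Aless (𝒜 : ℕ → Submodule 𝕜 A) (m : ℕ∞) : Submodule 𝕜 A :=
  ⨆ i ∈ {i : ℕ | (i : ℕ∞) < m}, 𝒜 i

open Classical in
/-- Truncation of `c ∈ A` to its components of degree `< m` (the action of `c`
on `A^{<m} = A/(⊕_{i ≥ m} A_i)`). -/
noncomputable def truncA (𝒜 : ℕ → Submodule 𝕜 A) [GradedAlgebra 𝒜] (m : ℕ∞) (c : A) : A :=
  ∑ i ∈ (DirectSum.decompose 𝒜 c).support.filter (fun i : ℕ => (i : ℕ∞) < m),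
    (DirectSum.decompose 𝒜 c i : A)

open Classical in
/-- The invariant `m_X` attached to a Gröbner basis `G` :
`m_X = min { v(lc g) | g ∈ G, lp g ∣ X }`, and `m_X = a` if no `lp g` divides `X`. -/
noncomputable def mXv [LinearOrder (Mon n r)] (𝒜 : ℕ → Submodule 𝕜 A) [GradedAlgebra 𝒜]
    (a : ℕ∞) (G : Finset (Lmod A n r)) (X : Mon n r) : ℕ∞ :=
  if ∃ g ∈ G, lpDvdMon g X then
    sInf {m : ℕ∞ | ∃ g ∈ G, lpDvdMon g X ∧ m = valA 𝒜 a (lcL g)}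
  else a

end Graded

section Tdvr

/-- `f ∈ I·L`, coefficientwise. -/
def memFil (I : Ideal A) (f : Lmod A n r) : Prop := ∀ X : Mon n r, coeffL f X ∈ I

/-- The symbol map `L → gr(L)` in degree `i`, applied coefficientwise
(`s = sym i : A → gr(A)` being the degree-`i` symbol map of the ring). -/
noncomputable def symL (s : A → B) (f : Lmod A n r) : Lmod B n r := fun l =>
  ∑ d ∈ (f l).support, MvPolynomial.monomial d (s (MvPolynomial.coeff d (f l)))

/-- The associated graded module `gr(M) ⊆ gr(L)` of a submodule `M ⊆ L`, with
respect to the `I`-adic filtration: the `gr(R)`-submodule generated by the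
symbols of the elements of `M ∩ I^i·L`, for all `i`. -/
noncomputable def grSub (I : Ideal A) (sym : ℕ → A → B)
    (M : Submodule (MvPolynomial (Fin n) A) (Lmod A n r)) :
    Submodule (MvPolynomial (Fin n) B) (Lmod B n r) :=
  Submodule.span (MvPolynomial (Fin n) B)
    {h : Lmod B n r | ∃ i : ℕ, ∃ f ∈ M, memFil (I ^ i) f ∧ h = symL (sym i) f}

end Tdvr

/-! The leading term of `f ∈ L` is the sum of the leading terms of those homogeneous components
`f_i` of `f` whose coefficient at `lp f` is nonzero. For graded `M` these components lie in `M`, so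
`Lt M` is generated by leading terms of nonzero homogeneous elements of `M`. Since `A` is a quotient
of `k[X]` via `X ↦ ϖ`, `L` is a noetherian `R`-module, and finitely many of these leading terms
already generate `Lt M`. -/

theorem Submodule.exists_finset_subset_span_image_eq {R M N : Type*} [Semiring R]
    [AddCommMonoid N] [Module R N] {φ : M → N} {S : Set M} (h : (span R (φ '' S)).FG) :
    ∃ G : Finset M, ↑G ⊆ S ∧ span R (φ '' G) = span R (φ '' S) := by
  classical
  obtain ⟨T, hTS, hT⟩ := (fg_span_iff_fg_span_finset_subset _).1 h
  obtain ⟨G, hGS, rfl⟩ := Finset.subset_set_image_iff.1 hTS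
  exact ⟨G, hGS, by rw [hT, Finset.coe_image]⟩

namespace IsGradedTdvr

variable {k : Type*} [CommRing k] [Algebra k A] {𝒜 : ℕ → Submodule k A} {a : ℕ∞} {ϖ : A}

theorem le_range_aeval (h : IsGradedTdvr 𝒜 a ϖ) (i : ℕ) :
    𝒜 i ≤ Subalgebra.toSubmodule (Polynomial.aeval ϖ).range := by
  rcases lt_or_ge (i : ℕ∞) a with hi | hi
  · rw [(h.2.2.1 i hi).2, Submodule.span_le, Set.singleton_subset_iff]
    exact ⟨Polynomial.X ^ i, by simp⟩
  · rw [h.2.2.2 i hi]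
    exact bot_le

theorem aeval_surjective [GradedAlgebra 𝒜] (h : IsGradedTdvr 𝒜 a ϖ) :
    Function.Surjective (Polynomial.aeval (R := k) ϖ) := by
  intro x
  induction x using DirectSum.Decomposition.inductionOn 𝒜 with
  | zero => exact ⟨0, map_zero _⟩
  | homogeneous x => exact h.le_range_aeval _ x.2
  | add x y hx hy =>
    obtain ⟨p, rfl⟩ := hx
    obtain ⟨q, rfl⟩ := hy
    exact ⟨p + q, map_add _ p q⟩

theorem isNoetherianRing [IsNoetherianRing k] [GradedAlgebra 𝒜] (h : IsGradedTdvr 𝒜 a ϖ) :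
    IsNoetherianRing A :=
  isNoetherianRing_of_surjective _ _ (Polynomial.aeval ϖ).toRingHom h.aeval_surjective

end IsGradedTdvr

theorem mem_suppL {f : Lmod A n r} {X : Mon n r} : X ∈ suppL f ↔ coeffL f X ≠ 0 := by
  simp [suppL, coeffL, Prod.ext_iff]

theorem suppL_nonempty_iff {f : Lmod A n r} : (suppL f).Nonempty ↔ f ≠ 0 := by
  rw [Finset.nonempty_iff_ne_empty, ne_eq, ne_eq, not_iff_not, Finset.eq_empty_iff_forall_notMem]
  simp only [mem_suppL, not_not]
  constructor
  · intro h
    funext l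
    ext d
    exact h (d, l)
  · rintro rfl X
    simp [coeffL]

theorem monL_sum {ι : Type*} (s : Finset ι) (c : ι → A) (X : Mon n r) :
    monL X (∑ i ∈ s, c i) = ∑ i ∈ s, monL X (c i) := by
  simp only [monL, map_sum]
  exact map_sum (AddMonoidHom.single (fun _ => MvPolynomial (Fin n) A) X.2) _ s

section Order

variable [LinearOrder (Mon n r)]

theorem ltL_eq {f : Lmod A n r} (hf : (suppL f).Nonempty) :
    ltL f = monL ((suppL f).max' hf) (coeffL f ((suppL f).max' hf)) := by
  rw [ltL, dif_pos hf, lcL, dif_pos hf]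

theorem LtS_eq_span_of_forall_ne_zero {S : Set (Lmod A n r)} (hS : ∀ f ∈ S, f ≠ 0) :
    LtS S = Submodule.span (MvPolynomial (Fin n) A) (ltL '' S) := by
  rw [LtS, Set.sep_eq_self_iff_mem_true.2 hS]

end Order

section Graded

variable {𝕜 : Type*} [CommSemiring 𝕜] [Algebra 𝕜 A] (𝒜 : ℕ → Submodule 𝕜 A) [GradedAlgebra 𝒜]

theorem coeffL_compL (i : ℕ) (f : Lmod A n r) (X : Mon n r) :
    coeffL (compL 𝒜 i f) X = (DirectSum.decompose 𝒜 (coeffL f X) i : A) := by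
  classical
  unfold coeffL compL
  simp only [coeff_sum, coeff_monomial, Finset.sum_ite_eq', mem_support_iff]
  split_ifs with h
  · rfl
  · rw [not_not.1 h, DirectSum.decompose_zero, DirectSum.zero_apply, ZeroMemClass.coe_zero]

theorem homogL_compL (i : ℕ) (f : Lmod A n r) : HomogL 𝒜 i (compL 𝒜 i f) := fun X => by
  rw [coeffL_compL]
  exact SetLike.coe_mem _

theorem suppL_compL_subset (i : ℕ) (f : Lmod A n r) : suppL (compL 𝒜 i f) ⊆ suppL f := by
  intro X hX
  rw [mem_suppL] at hX ⊢
  contrapose! hX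
  rw [coeffL_compL, hX, DirectSum.decompose_zero, DirectSum.zero_apply, ZeroMemClass.coe_zero]

variable [LinearOrder (Mon n r)] {f : Lmod A n r}

theorem ltL_compL (hf : (suppL f).Nonempty) {i : ℕ}
    (hi : (DirectSum.decompose 𝒜 (coeffL f ((suppL f).max' hf)) i : A) ≠ 0) :
    ltL (compL 𝒜 i f) =
      monL ((suppL f).max' hf) (DirectSum.decompose 𝒜 (coeffL f ((suppL f).max' hf)) i : A) := by
  set X₀ := (suppL f).max' hf
  have hX₀ : X₀ ∈ suppL (compL 𝒜 i f) := mem_suppL.2 (by rwa [coeffL_compL])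
  have hmax : (suppL (compL 𝒜 i f)).max' ⟨X₀, hX₀⟩ = X₀ :=
    (Finset.max'_eq_iff _ _ X₀).2
      ⟨hX₀, fun Y hY => Finset.le_max' _ _ (suppL_compL_subset 𝒜 i f hY)⟩
  rw [ltL_eq ⟨X₀, hX₀⟩, hmax, coeffL_compL]

theorem ltL_eq_sum_ltL_compL [∀ (i) (x : 𝒜 i), Decidable (x ≠ 0)] (hf : (suppL f).Nonempty) :
    ltL f = ∑ i ∈ (DirectSum.decompose 𝒜 (coeffL f ((suppL f).max' hf))).support,
      ltL (compL 𝒜 i f) := by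
  rw [ltL_eq hf]
  conv_lhs => rw [← DirectSum.sum_support_decompose 𝒜 (coeffL f ((suppL f).max' hf))]
  rw [monL_sum]
  refine Finset.sum_congr rfl fun i hi => (ltL_compL 𝒜 hf ?_).symm
  exact fun h0 => DFinsupp.mem_support_iff.1 hi (Subtype.ext h0)

theorem LtS_eq_span_ltL_homogL {M : Submodule (MvPolynomial (Fin n) A) (Lmod A n r)}
    (hM : IsGradedSub 𝒜 M) :
    LtS (M : Set (Lmod A n r)) = Submodule.span (MvPolynomial (Fin n) A)
      (ltL '' {f | f ∈ M ∧ f ≠ 0 ∧ ∃ i, HomogL 𝒜 i f}) := by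
  classical
  refine le_antisymm ?_ (Submodule.span_mono (Set.image_mono fun f hf => ⟨hf.1, hf.2.1⟩))
  rw [LtS, Submodule.span_le]
  rintro _ ⟨f, ⟨hfM, hf0⟩, rfl⟩
  have hf := suppL_nonempty_iff.2 hf0
  rw [ltL_eq_sum_ltL_compL 𝒜 hf]
  refine Submodule.sum_mem _ fun i hi => Submodule.subset_span ⟨compL 𝒜 i f, ⟨hM f hfM i, ?_, i,
    homogL_compL 𝒜 i f⟩, rfl⟩
  rw [← suppL_nonempty_iff]
  refine ⟨(suppL f).max' hf, mem_suppL.2 ?_⟩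
  rw [coeffL_compL]
  exact fun h0 => DFinsupp.mem_support_iff.1 hi (Subtype.ext h0)

end Graded

theorem exists_homogeneous_groebner_general {k A : Type*} [Field k] [CommRing A] [Algebra k A]
    (𝒜 : ℕ → Submodule k A) [GradedAlgebra 𝒜] (a : ℕ∞) (ϖ : A)
    (htdvr : IsGradedTdvr 𝒜 a ϖ)
    {n r : ℕ} [LinearOrder (Mon n r)]
    (M : Submodule (MvPolynomial (Fin n) A) (Lmod A n r))
    (hMgr : IsGradedSub 𝒜 M) :
    ∃ G : Finset (Lmod A n r), IsGB G M ∧ ∀ g ∈ G, ∃ i : ℕ, HomogL 𝒜 i g := by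
  have := htdvr.isNoetherianRing
  have hfg := IsNoetherian.noetherian (LtS (M : Set (Lmod A n r)))
  rw [LtS_eq_span_ltL_homogL 𝒜 hMgr] at hfg
  obtain ⟨G, hGS, hG⟩ := Submodule.exists_finset_subset_span_image_eq hfg
  refine ⟨G, ⟨fun g hg => ⟨(hGS hg).1, (hGS hg).2.1⟩, ?_⟩, fun g hg => (hGS hg).2.2⟩
  rw [LtS_eq_span_of_forall_ne_zero fun g hg => (hGS hg).2.1, hG, LtS_eq_span_ltL_homogL 𝒜 hMgr]

/-- over a graded tdvr `A`, any nonzero graded `R`-submodule of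
`L` has a homogeneous Gröbner basis. -/
theorem exists_homogeneous_groebner {k A : Type*} [Field k] [CommRing A] [Algebra k A]
    (𝒜 : ℕ → Submodule k A) [GradedAlgebra 𝒜] (a : ℕ∞) (ϖ : A)
    (htdvr : IsGradedTdvr 𝒜 a ϖ)
    {n r : ℕ} (hr : 1 ≤ r) [LinearOrder (Mon n r)] (hto : IsTermOrder n r)
    (M : Submodule (MvPolynomial (Fin n) A) (Lmod A n r)) (hM : M ≠ ⊥)
    (hMgr : IsGradedSub 𝒜 M) :
    ∃ G : Finset (Lmod A n r), IsGB G M ∧ ∀ g ∈ G, ∃ i : ℕ, HomogL 𝒜 i g :=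
  exists_homogeneous_groebner_general 𝒜 a ϖ htdvr M hMgr
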